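/- Let n, m ≥ 1. If τ is a permutation of {1,…,k^n} attainable from k^n chips, and γ_1, …, γ_{k^n} are permutations of {1,…,k^m} each attainable from k^m chips, then the inflation τ[γ_1,…,γ_{k^n}] — the permutation of {1,…,k^{n+m}} whose entry at position (i−1)k^m + j is (τ(i)−1)k^m + γ_i(j) for 1 ≤ i ≤ k^n and 1 ≤ j ≤ k^m — is attainable from k^{n+m} chips. -/

import Mathlib

/-- A firing step for `N` labeled chips on the infinite directed `k`-ary tree with
vertex set `{1, 2, 3, …}`, root `1`, where the `j`-th child (`1 ≤ j ≤ k`) of vertex `v`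
is `k*(v-1)+j+1`.  A configuration assigns to each chip (element of `Fin N`,
representing labels `1,…,N`) a vertex.  A step picks `k` chips `t 0 < t 1 < ⋯ < t (k-1)`
all on a common vertex `v` and sends the `j`-th smallest to the `j`-th child. -/
def FireStep (k N : ℕ) (c c' : Fin N → ℕ) : Prop :=
  ∃ (v : ℕ) (t : Fin k → Fin N),
    StrictMono t ∧
    (∀ j, c (t j) = v) ∧
    (∀ j : Fin k, c' (t j) = k * (v - 1) + (j : ℕ) + 2) ∧
    (∀ i : Fin N, (∀ j, i ≠ t j) → c' i = c i)

/-- Reachable from the initial configuration of `k^ℓ` chips all on the root. -/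
def Reachable (k ℓ : ℕ) (c : Fin (k ^ ℓ) → ℕ) : Prop :=
  Relation.ReflTransGen (FireStep k (k ^ ℓ)) (fun _ => 1) c

/-- A configuration is stable if every vertex holds fewer than `k` chips. -/
def Stable (k N : ℕ) (c : Fin N → ℕ) : Prop :=
  ∀ v : ℕ, (Finset.univ.filter (fun i => c i = v)).card < k

/-- `layerStart k m` is the leftmost (smallest-numbered) vertex on layer `m+1`;
the vertices of layer `m+1` read left to right are `layerStart k m + p` for `0 ≤ p < k^m`. -/
def layerStart (k : ℕ) : ℕ → ℕ
  | 0 => 1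
  | m + 1 => k * (layerStart k m - 1) + 2

/-- `σ` is the permutation associated to some reachable stable configuration of `k^ℓ`
chips: `σ p` (0-based, representing label `σ p + 1`) is the chip on the `p`-th leftmost
vertex of layer `ℓ+1`. -/
def Attainable (k ℓ : ℕ) (σ : Equiv.Perm (Fin (k ^ ℓ))) : Prop :=
  ∃ c : Fin (k ^ ℓ) → ℕ, Reachable k ℓ c ∧ Stable k (k ^ ℓ) c ∧
    ∀ p : Fin (k ^ ℓ), c (σ p) = layerStart k ℓ + (p : ℕ)


/-!
Write each of the `k^(n+m)` chips as a pair `(i, j)` (block `i`, index `j` in the block). First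
run a firing sequence for `τ` on the blocks: each firing of `k` chips `t_a` is simulated by `k^m`
firings, one for each `j`, of the chips `(t_a, j)`. Afterwards block `b` sits on the `τ⁻¹ b`-th
vertex of layer `n + 1`. The subtree below any vertex is a copy of the whole tree, so a firing
sequence for `γ_{τ⁻¹ b}` can then be run on block `b` inside that subtree, and the leaves of the
copies, read left to right, spell out the inflation.
-/

open Relation Function

theorem Relation.ReflTransGen.pi_of_update {ι : Type*} [Fintype ι] [DecidableEq ι]
    {β : ι → Type*} {r : (∀ i, β i) → (∀ i, β i) → Prop} {s : ∀ i, β i → β i → Prop}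
    (h : ∀ f i x y, s i x y → r (update f i x) (update f i y))
    {f g : ∀ i, β i} (hfg : ∀ i, ReflTransGen (s i) (f i) (g i)) : ReflTransGen r f g := by
  have key : ∀ t : Finset ι, ReflTransGen r f (t.piecewise g f) := by
    intro t
    induction t using Finset.induction_on with
    | empty => rw [Finset.piecewise_empty]
    | insert j t hj ih =>
      refine ih.trans ?_
      rw [Finset.piecewise_insert]
      conv_lhs => rw [← update_eq_self j (t.piecewise g f), Finset.piecewise_eq_of_notMem _ _ _ hj]
      exact (hfg j).lift _ (h _ j)
  simpa using key Finset.univ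

def PreservesChildren (k : ℕ) (φ : ℕ → ℕ) : Prop :=
  ∀ v j, j < k → φ (k * (v - 1) + j + 2) = k * (φ v - 1) + j + 2

theorem FireStep.embed {k N P : ℕ} {x y : Fin N → ℕ} (hxy : FireStep k N x y)
    {ι : Fin N → Fin P} (hι : StrictMono ι) {φ : ℕ → ℕ} (hφ : PreservesChildren k φ)
    {F F' : Fin P → ℕ} (hF : ∀ b, F (ι b) = φ (x b)) (hF' : ∀ b, F' (ι b) = φ (y b))
    (hoff : ∀ L, (∀ b, L ≠ ι b) → F' L = F L) : FireStep k P F F' := by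
  obtain ⟨v, t, ht, hx, hy, hfix⟩ := hxy
  refine ⟨φ v, ι ∘ t, hι.comp ht, fun j => by simp [hF, hx],
    fun j => by simp [hF', hy, hφ _ _ j.isLt], fun L hL => ?_⟩
  by_cases hL' : ∃ b, L = ι b
  · obtain ⟨b, rfl⟩ := hL'
    rw [hF, hF', hfix b fun j hj => hL j (by rw [hj]; rfl)]
  · exact hoff L (not_exists.mp hL')

section Blocks

variable {N M P : ℕ} (h : N * M = P)

def blockEquiv : Fin N × Fin M ≃ Fin P := finProdFinEquiv.trans (finCongr h)

@[simp] lemma blockEquiv_val (b : Fin N × Fin M) : (blockEquiv h b : ℕ) = b.2 + M * b.1 := rfl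

lemma blockEquiv_strictMono_left (j : Fin M) : StrictMono fun i => blockEquiv h (i, j) := by
  intro i i' hii'
  simp only [Fin.lt_def, blockEquiv_val]
  have := Nat.mul_lt_mul_of_pos_left hii' (j.pos)
  omega

lemma blockEquiv_strictMono_right (i : Fin N) : StrictMono fun j => blockEquiv h (i, j) := by
  intro j j' hjj'
  simp only [Fin.lt_def, blockEquiv_val]
  omega

end Blocks

section Phases

variable {k N M P : ℕ} (h : N * M = P)

theorem FireStep.inflate {c c' : Fin N → ℕ} (hc : FireStep k N c c') :
    ReflTransGen (FireStep k P) (c ∘ Prod.fst ∘ (blockEquiv h).symm)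
      (c' ∘ Prod.fst ∘ (blockEquiv h).symm) := by
  classical
  let cols (D : Fin M → Fin N → ℕ) (L : Fin P) : ℕ :=
    D ((blockEquiv h).symm L).2 ((blockEquiv h).symm L).1
  have hstep : ∀ D j x y, FireStep k N x y →
      FireStep k P (cols (update D j x)) (cols (update D j y)) := by
    intro D j x y hxy
    refine hxy.embed (blockEquiv_strictMono_left h j) (φ := id) (fun _ _ _ => rfl)
      (fun b => by simp [cols]) (fun b => by simp [cols]) fun L hL => ?_
    have hj : ((blockEquiv h).symm L).2 ≠ j := fun hj =>
      hL ((blockEquiv h).symm L).1 (by rw [← hj, Prod.mk.eta, Equiv.apply_symm_apply])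
    simp only [cols, update_of_ne hj]
  exact ((ReflTransGen.pi_of_update (r := fun D D' => FireStep k P (cols D) (cols D'))
    hstep (f := fun _ => c) (g := fun _ => c') fun _ => .single hc).lift cols fun _ _ => id)

theorem reflTransGen_fireStep_inflate {c c' : Fin N → ℕ}
    (hc : ReflTransGen (FireStep k N) c c') :
    ReflTransGen (FireStep k P) (c ∘ Prod.fst ∘ (blockEquiv h).symm)
      (c' ∘ Prod.fst ∘ (blockEquiv h).symm) :=
  hc.lift' (· ∘ Prod.fst ∘ (blockEquiv h).symm) fun _ _ => FireStep.inflate h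

theorem reflTransGen_fireStep_blockwise (φ : Fin N → ℕ → ℕ)
    (hφ : ∀ i, PreservesChildren k (φ i))
    {x y : Fin N → Fin M → ℕ} (hxy : ∀ i, ReflTransGen (FireStep k M) (x i) (y i)) :
    ReflTransGen (FireStep k P) ((fun p => φ p.1 (x p.1 p.2)) ∘ (blockEquiv h).symm)
      ((fun p => φ p.1 (y p.1 p.2)) ∘ (blockEquiv h).symm) := by
  classical
  let rows (C : Fin N → Fin M → ℕ) (L : Fin P) : ℕ :=
    φ ((blockEquiv h).symm L).1 (C ((blockEquiv h).symm L).1 ((blockEquiv h).symm L).2)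
  have hstep : ∀ C i a b, FireStep k M a b →
      FireStep k P (rows (update C i a)) (rows (update C i b)) := by
    intro C i a b hab
    refine hab.embed (blockEquiv_strictMono_right h i) (hφ i)
      (fun j => by simp [rows]) (fun j => by simp [rows]) fun L hL => ?_
    have hi : ((blockEquiv h).symm L).1 ≠ i := fun hi =>
      hL ((blockEquiv h).symm L).2 (by rw [← hi, Prod.mk.eta, Equiv.apply_symm_apply])
    simp only [rows, update_of_ne hi]
  exact (ReflTransGen.pi_of_update (r := fun C C' => FireStep k P (rows C) (rows C'))
    hstep hxy).lift rows fun _ _ => id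

end Phases

section Layers

variable {k : ℕ}

lemma one_le_layerStart (k : ℕ) : ∀ m, 1 ≤ layerStart k m
  | 0 => le_refl 1
  | m + 1 => by simp only [layerStart]; omega

lemma layerStart_add (k n : ℕ) :
    ∀ m, layerStart k (n + m) = k ^ m * (layerStart k n - 1) + layerStart k m
  | 0 => by
    have := one_le_layerStart k n
    simp only [add_zero, pow_zero, one_mul, layerStart]
    omega
  | m + 1 => by
    obtain ⟨a, ha⟩ := Nat.exists_eq_add_of_le' (one_le_layerStart k m)
    rw [← add_assoc, layerStart, layerStart, layerStart_add k n m, ha, Nat.add_sub_cancel,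
      Nat.add_sub_assoc (by omega), Nat.add_sub_cancel, pow_succ]
    ring

theorem PreservesChildren.apply_layerStart_add {φ : ℕ → ℕ} (hφ : PreservesChildren k φ)
    (hk : 0 < k) (hφ1 : 1 ≤ φ 1) :
    ∀ m q, q < k ^ m → φ (layerStart k m + q) = k ^ m * (φ 1 - 1) + layerStart k m + q
  | 0, q, hq => by
    obtain rfl : q = 0 := by simpa using hq
    simp only [layerStart, add_zero, pow_zero, one_mul]
    omega
  | m + 1, q, hq => by
    have hq' : q / k < k ^ m := by rw [Nat.div_lt_iff_lt_mul hk, ← pow_succ]; exact hq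
    obtain ⟨a, ha⟩ := Nat.exists_eq_add_of_le' (one_le_layerStart k m)
    obtain ⟨r, hr⟩ := Nat.exists_eq_add_of_le' hφ1
    have hchild : layerStart k (m + 1) + q = k * (layerStart k m + q / k - 1) + q % k + 2 := by
      rw [layerStart, ha, Nat.add_sub_cancel, add_right_comm a, Nat.add_sub_cancel]
      have := Nat.div_add_mod q k
      rw [mul_add]
      linarith
    rw [hchild, hφ _ _ (Nat.mod_lt q hk), hφ.apply_layerStart_add hk hφ1 m _ hq', layerStart, ha,
      hr]
    have := Nat.div_add_mod q k
    simp only [Nat.add_sub_cancel, pow_succ]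
    rw [← add_assoc, Nat.add_right_comm _ 1, Nat.add_sub_cancel]
    linear_combination this

-- `graft k r` maps the tree onto the subtree rooted at `r`: recursively, since `(u - 2) / k + 1`
-- is the parent of `u ≥ 2` and `(u - 2) % k` its position among its siblings.
def graft (k r : ℕ) (u : ℕ) : ℕ :=
  if u ≤ 1 then r else k * (graft k r ((u - 2) / k + 1) - 1) + (u - 2) % k + 2
termination_by u
decreasing_by have := Nat.div_le_self (u - 2) k; omega

@[simp] lemma graft_one (r : ℕ) : graft k r 1 = r := by
  rw [graft, if_pos le_rfl]

lemma preservesChildren_graft (hk : 0 < k) (r : ℕ) : PreservesChildren k (graft k r) := by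
  intro v j hj
  have hparent : (k * (v - 1) + j + 2 - 2) / k + 1 = v - 1 + 1 := by
    rw [Nat.add_sub_cancel, Nat.mul_add_div hk, Nat.div_eq_of_lt hj, add_zero]
  have hpos : (k * (v - 1) + j + 2 - 2) % k = j := by
    rw [Nat.add_sub_cancel, Nat.mul_add_mod, Nat.mod_eq_of_lt hj]
  have hpred : graft k r (v - 1 + 1) = graft k r v := by
    rcases v with _ | v
    · show graft k r 1 = graft k r 0
      rw [graft_one, graft, if_pos (Nat.zero_le 1)]
    · rfl
  rw [graft, if_neg (by omega), hparent, hpos, hpred]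

end Layers

lemma stable_of_apply_eq_add {k N : ℕ} (hk : 2 ≤ k) {c : Fin N → ℕ} {σ : Equiv.Perm (Fin N)}
    {a : ℕ} (hc : ∀ p, c (σ p) = a + p) : Stable k N c := by
  have hinj : Injective c := fun x y hxy => by
    have hx := hc (σ.symm x)
    have hy := hc (σ.symm y)
    rw [Equiv.apply_symm_apply] at hx hy
    exact σ.symm.injective (Fin.ext (by omega))
  intro v
  calc (Finset.univ.filter (fun i => c i = v)).card ≤ 1 :=
        Finset.card_le_one.mpr fun x hx y hy =>
          hinj ((Finset.mem_filter.mp hx).2.trans (Finset.mem_filter.mp hy).2.symm)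
    _ < k := hk

theorem stmt4 (k n m : ℕ) (hk : 2 ≤ k)
    (τ : Equiv.Perm (Fin (k ^ n))) (γ : Fin (k ^ n) → Equiv.Perm (Fin (k ^ m)))
    (hτ : Attainable k n τ) (hγ : ∀ i, Attainable k m (γ i))
    (ρ : Equiv.Perm (Fin (k ^ (n + m))))
    (hρ : ∀ (i : Fin (k ^ n)) (j : Fin (k ^ m)),
      (ρ ⟨(i : ℕ) * k ^ m + (j : ℕ), by
        have hi := i.isLt
        have hj := j.isLt
        have h : (i : ℕ) * k ^ m + (j : ℕ) < k ^ n * k ^ m := by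
          calc (i : ℕ) * k ^ m + (j : ℕ) < (i : ℕ) * k ^ m + k ^ m := by omega
            _ = ((i : ℕ) + 1) * k ^ m := by ring
            _ ≤ k ^ n * k ^ m := Nat.mul_le_mul (by omega) (le_refl _)
        simpa [pow_add] using h⟩ : ℕ) = (τ i : ℕ) * k ^ m + ((γ i) j : ℕ)) :
    Attainable k (n + m) ρ := by
  obtain ⟨cτ, hτreach, -, hcτ⟩ := hτ
  choose d hdreach _ hd using hγ
  have hk0 : 0 < k := by omega
  set e := blockEquiv (pow_add k n m).symm
  have he : ∀ b, (e b : ℕ) = b.2 + k ^ m * b.1 := fun _ => rfl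
  have hρe : ∀ i j, ρ (e (i, j)) = e (τ i, γ i j) := fun i j => by
    have hij : e (i, j) = ⟨i * k ^ m + j, lt_of_eq_of_lt (by rw [he]; ring) (e (i, j)).isLt⟩ :=
      Fin.ext ((he _).trans (by dsimp only; ring))
    rw [hij]
    exact Fin.ext ((hρ i j).trans (by rw [he]; ring))
  let final (L : Fin (k ^ (n + m))) : ℕ :=
    graft k (cτ (e.symm L).1) (d (τ.symm (e.symm L).1) (e.symm L).2)
  have hfinal : ∀ p, final (ρ p) = layerStart k (n + m) + p := by
    intro p
    obtain ⟨⟨i, j⟩, rfl⟩ := e.surjective p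
    have hroot := one_le_layerStart k n
    simp only [final, hρe, Equiv.symm_apply_apply, hd, hcτ]
    rw [(preservesChildren_graft hk0 _).apply_layerStart_add hk0 (by rw [graft_one]; omega) m _
      j.isLt, graft_one, layerStart_add, he, Nat.sub_add_comm hroot]
    ring
  refine ⟨final, ?_, stable_of_apply_eq_add hk hfinal, hfinal⟩
  have hblocks := reflTransGen_fireStep_blockwise (pow_add k n m).symm (graft k ∘ cτ)
    (fun _ => preservesChildren_graft hk0 _) (x := fun _ _ => 1) fun b => hdreach (τ.symm b)
  simp only [Function.comp_apply, graft_one] at hblocks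
  exact (reflTransGen_fireStep_inflate _ hτreach).trans hblocks
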